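/- arXiv:2006.14444 — 2 statements merged into one kernel-verified Lean document; each statement's English description precedes it below -/
import Mathlib

section
/- In the expected two-block model, let A ⊆ V with α_i = |A ∩ V_i|/(n/2). If α₂ ≥ (1 − 2α₁)·q/p, then c({A ∪ V₂, A^c \ V₂}) ≤ c({A, A^c}). -/
/-!
Write `m = n/2`, `a = |A ∩ V₁|`, `b = |A ∩ V₂|`. The cut cost of a set `S` depends only on how many
vertices of each block it contains, and comparing the two explicit formulas gives
`c(A) - c(A ∪ V₂) = (m - b) (p b - q (m - 2a))`. The first factor is nonnegative because
`b ≤ m`, and the second one is the hypothesis `b/m ≥ (1 - 2a/m) q/p` with denominators cleared.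
-/

open Finset

lemma sum_sum_eq_card_mul_card_mul {V : Type*} {f : V → V → ℝ} {T U : Finset V} {c : ℝ}
    (h : ∀ u ∈ T, ∀ v ∈ U, f u v = c) :
    ∑ u ∈ T, ∑ v ∈ U, f u v = #T * #U * c := by
  rw [sum_congr rfl fun u hu => sum_congr rfl (h u hu)]
  simp only [sum_const, nsmul_eq_mul]
  ring

section CutCost

variable {V : Type*} [Fintype V] [DecidableEq V]

def cutCost (w : V → V → ℝ) (S : Finset V) : ℝ := ∑ u ∈ S, ∑ v ∈ Sᶜ, w u v

lemma sum_inter_add_sum_inter_of_partition {M : Type*} [AddCommMonoid M] {V₁ V₂ : Finset V}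
    (hdisj : Disjoint V₁ V₂) (hunion : V₁ ∪ V₂ = univ) (T : Finset V) (g : V → M) :
    ∑ x ∈ T ∩ V₁, g x + ∑ x ∈ T ∩ V₂, g x = ∑ x ∈ T, g x := by
  rw [← sum_union (hdisj.mono inter_subset_right inter_subset_right),
    ← inter_union_distrib_left, hunion, inter_univ]

lemma card_compl_inter_cast (S B : Finset V) : (#(Sᶜ ∩ B) : ℝ) = #B - #(S ∩ B) := by
  rw [inter_comm, ← sdiff_eq_inter_compl, inter_comm S, eq_sub_iff_add_eq]
  exact_mod_cast card_sdiff_add_card_inter B S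

lemma cutCost_eq_of_twoBlock {V₁ V₂ : Finset V} (hdisj : Disjoint V₁ V₂) (hunion : V₁ ∪ V₂ = univ)
    {p q : ℝ} {w : V → V → ℝ}
    (hw : ∀ u v, u ≠ v → w u v = if (u ∈ V₁ ↔ v ∈ V₁) then p else q) (S : Finset V) :
    cutCost w S =
      p * (#(S ∩ V₁) * (#V₁ - #(S ∩ V₁)) + #(S ∩ V₂) * (#V₂ - #(S ∩ V₂))) +
      q * (#(S ∩ V₁) * (#V₂ - #(S ∩ V₂)) + #(S ∩ V₂) * (#V₁ - #(S ∩ V₁))) := by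
  have hnot₁ : ∀ x ∈ V₂, x ∉ V₁ := fun x hx => disjoint_right.1 hdisj hx
  have block : ∀ (X Y : Finset V) (c : ℝ),
      (∀ u ∈ X, ∀ v ∈ Y, (if (u ∈ V₁ ↔ v ∈ V₁) then p else q) = c) →
      ∑ u ∈ S ∩ X, ∑ v ∈ Sᶜ ∩ Y, w u v = #(S ∩ X) * #(Sᶜ ∩ Y) * c := by
    intro X Y c h
    refine sum_sum_eq_card_mul_card_mul fun u hu v hv => ?_
    rw [mem_inter] at hu hv
    have huv : u ≠ v := fun huv => mem_compl.1 hv.1 (huv ▸ hu.1)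
    rw [hw u v huv, h u hu.2 v hv.2]
  rw [cutCost, ← sum_inter_add_sum_inter_of_partition hdisj hunion S]
  simp only [← sum_inter_add_sum_inter_of_partition hdisj hunion Sᶜ, sum_add_distrib]
  rw [block V₁ V₁ p fun u hu v hv => by simp [hu, hv],
    block V₁ V₂ q fun u hu v hv => by simp [hu, hnot₁ v hv],
    block V₂ V₁ q fun u hu v hv => by simp [hv, hnot₁ u hu],
    block V₂ V₂ p fun u hu v hv => by simp [hnot₁ u hu, hnot₁ v hv],
    card_compl_inter_cast, card_compl_inter_cast]
  ring

end CutCost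

theorem stmt5_general {V : Type*} [Fintype V] [DecidableEq V] (n : ℕ) (hn : 0 < n)
    (V1 V2 : Finset V) (hdisj : Disjoint V1 V2) (hunion : V1 ∪ V2 = Finset.univ)
    (h1 : 2 * V1.card = n) (h2 : 2 * V2.card = n)
    (p q : ℝ) (hq : 0 < q) (hqp : q < p)
    (w : V → V → ℝ)
    (hw : ∀ u v, w u v = if u = v then 0 else if (u ∈ V1 ↔ v ∈ V1) then p else q)
    (A : Finset V)
    (hα : (((A ∩ V2).card : ℝ) / ((n : ℝ) / 2)) ≥
      (1 - 2 * (((A ∩ V1).card : ℝ) / ((n : ℝ) / 2))) * q / p) :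
    (∑ u ∈ A ∪ V2, ∑ v ∈ (A ∪ V2)ᶜ, w u v) ≤ ∑ u ∈ A, ∑ v ∈ Aᶜ, w u v := by
  have hcost := cutCost_eq_of_twoBlock (w := w) hdisj hunion fun u v huv => by rw [hw, if_neg huv]
  have hV₁ : (#V1 : ℝ) = n / 2 := by rw [← h1]; push_cast; ring
  have hV₂ : (#V2 : ℝ) = n / 2 := by rw [← h2]; push_cast; ring
  have hinter : (A ∪ V2) ∩ V1 = A ∩ V1 := by
    rw [union_inter_distrib_right, disjoint_iff_inter_eq_empty.1 hdisj.symm, union_empty]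
  have hbm : (#(A ∩ V2) : ℝ) ≤ n / 2 := hV₂ ▸ mod_cast card_le_card inter_subset_right
  change cutCost w (A ∪ V2) ≤ cutCost w A
  rw [hcost, hcost, hinter, union_inter_cancel_right, hV₁, hV₂]
  set m : ℝ := n / 2
  set a : ℝ := (#(A ∩ V1) : ℝ)
  set b : ℝ := (#(A ∩ V2) : ℝ)
  have hm : 0 < m := by positivity
  have hp : 0 < p := hq.trans hqp
  have hsep : q * (m - 2 * a) ≤ p * b := by
    rw [ge_iff_le, div_le_div_iff₀ hp hm] at hα
    calc q * (m - 2 * a) = (1 - 2 * (a / m)) * q * m := by field_simp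
      _ ≤ b * p := hα
      _ = p * b := mul_comm b p
  have key : 0 ≤ (m - b) * (p * b - q * (m - 2 * a)) :=
    mul_nonneg (sub_nonneg.2 hbm) (sub_nonneg.2 hsep)
  linear_combination key

theorem stmt5 {V : Type*} [Fintype V] [DecidableEq V] (n : ℕ) (hn : 0 < n)
    (V1 V2 : Finset V) (hdisj : Disjoint V1 V2) (hunion : V1 ∪ V2 = Finset.univ)
    (h1 : 2 * V1.card = n) (h2 : 2 * V2.card = n)
    (p q : ℝ) (hq : 0 < q) (hqp : q < p) (hp : p ≤ 1)
    (w : V → V → ℝ)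
    (hw : ∀ u v, w u v = if u = v then 0 else if (u ∈ V1 ↔ v ∈ V1) then p else q)
    (A : Finset V)
    (hα : (((A ∩ V2).card : ℝ) / ((n : ℝ) / 2)) ≥
      (1 - 2 * (((A ∩ V1).card : ℝ) / ((n : ℝ) / 2))) * q / p) :
    (∑ u ∈ A ∪ V2, ∑ v ∈ (A ∪ V2)ᶜ, w u v) ≤ ∑ u ∈ A, ∑ v ∈ Aᶜ, w u v :=
  stmt5_general n hn V1 V2 hdisj hunion h1 h2 p q hq hqp w hw A hα
end

section
/- Let μ₁, …, μ_k ∈ {0,1}^m be mindset vectors such that every partition of the set {μ₁, …, μ_k} into two parts is induced by some coordinate (i.e., for every S ⊆ {1,…,k} there is a question x ≤ m with μ_i(x) = 1 iff i ∈ S). Then any vector τ ∈ {0,1}^m with the property that for every triple of coordinates x, y, z there exists some mindset μ_i agreeing with τ on x, y, and z must itself equal one of the μ_i. -/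
/-!
For a question `x`, let `A x` be the set of mindsets agreeing with `τ` at `x`. Given questions
`x, y`, separation provides a question `w` whose `true`-set is `A x ∩ A y`; the triple condition
at `x, y, w` yields a mindset in `A x ∩ A y` agreeing with `τ` at `w`, which forces `τ w = true`
and hence `A w = A x ∩ A y`. So the sets `A x` are closed under intersection; one of minimal
size is contained in all of them, and any of its members (it is nonempty by the triple condition
at `w, w, w`) agrees with `τ` everywhere.
-/

theorem Finset.exists_forall_subset_of_forall_exists_eq_inter {ι α : Type*} [Nonempty ι]
    [DecidableEq α] (A : ι → Finset α) (hinter : ∀ x y, ∃ w, A w = A x ∩ A y) :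
    ∃ w, ∀ x, A w ⊆ A x := by
  refine ⟨Function.argmin (fun x => (A x).card), fun x => ?_⟩
  set w := Function.argmin (fun x => (A x).card)
  obtain ⟨v, hv⟩ := hinter w x
  have hvw : A v = A w :=
    Finset.eq_of_subset_of_card_le (hv ▸ Finset.inter_subset_left)
      (Function.argmin_le (fun x => (A x).card) v)
  exact hvw ▸ hv ▸ Finset.inter_subset_right

section Agreement

variable {ι Q : Type*} [Fintype ι] (μ : ι → Q → Bool) (τ : Q → Bool)

def agreeSet (x : Q) : Finset ι := Finset.univ.filter fun i => μ i x = τ x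

variable {μ τ}

@[simp]
theorem mem_agreeSet {x : Q} {i : ι} : i ∈ agreeSet μ τ x ↔ μ i x = τ x := by
  simp [agreeSet]

theorem agreeSet_eq_inter [DecidableEq ι] {x y w : Q}
    (hw : ∀ i, μ i w = true ↔ i ∈ agreeSet μ τ x ∩ agreeSet μ τ y)
    (hagree : ∃ i, μ i x = τ x ∧ μ i y = τ y ∧ μ i w = τ w) :
    agreeSet μ τ w = agreeSet μ τ x ∩ agreeSet μ τ y := by
  obtain ⟨i, hix, hiy, hiw⟩ := hagree
  have hτw : τ w = true := hiw ▸ (hw i).2 (by simp [hix, hiy])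
  ext j
  rw [mem_agreeSet, hτw, hw j]

end Agreement

theorem stmt11 (k m : ℕ) (μ : Fin k → Fin m → Bool)
    (hsep : ∀ S : Finset (Fin k), ∃ x : Fin m, ∀ i, μ i x = true ↔ i ∈ S)
    (τ : Fin m → Bool)
    (hτ : ∀ x y z : Fin m, ∃ i, μ i x = τ x ∧ μ i y = τ y ∧ μ i z = τ z) :
    ∃ i, τ = μ i := by
  have : Nonempty (Fin m) := let ⟨x, _⟩ := hsep ∅; ⟨x⟩
  have hinter : ∀ x y, ∃ w, agreeSet μ τ w = agreeSet μ τ x ∩ agreeSet μ τ y := fun x y =>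
    let ⟨w, hw⟩ := hsep (agreeSet μ τ x ∩ agreeSet μ τ y)
    ⟨w, agreeSet_eq_inter hw (hτ x y w)⟩
  obtain ⟨w, hw⟩ := Finset.exists_forall_subset_of_forall_exists_eq_inter _ hinter
  obtain ⟨i, hi, -, -⟩ := hτ w w w
  exact ⟨i, funext fun x => (mem_agreeSet.1 (hw x (mem_agreeSet.2 hi))).symm⟩
end
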